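/- arXiv:1009.4188 — 6 statements merged into one kernel-verified Lean document; each statement's English description precedes it below -/
import Mathlib

section
/- Let A be an m×n matrix with rational entries. If α is a mystery-value of A over the complex numbers, i.e., there exist complex vectors β₁, β₂, each with coordinate sum 1, such that A(x,β₂) = α·J(x,β₂) for all x and A(β₁,y) = α·J(β₁,y) for all y, then α is rational. -/
open Matrix BigOperators

/-- a complex mystery-value of a matrix with rational entries is rational. -/
theorem robust_coin_flipping_stmt3
    {m n : ℕ} (A : Matrix (Fin m) (Fin n) ℚ) (α : ℂ)
    (β₁ : Fin m → ℂ) (β₂ : Fin n → ℂ)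
    (hβ₁ : ∑ i, β₁ i = 1) (hβ₂ : ∑ i, β₂ i = 1)
    (h1 : ∀ x : Fin m → ℂ, x ⬝ᵥ (A.map (Rat.cast : ℚ → ℂ)).mulVec β₂ = α * ∑ i, x i)
    (h2 : ∀ y : Fin n → ℂ, β₁ ⬝ᵥ (A.map (Rat.cast : ℚ → ℂ)).mulVec y = α * ∑ i, y i) :
    ∃ q : ℚ, α = (q : ℂ) := by
  classical
  -- The linear map encoding the rational system `A v = a • 1, ∑ v = 1`.
  let L : ((Fin n → ℚ) × ℚ) →ₗ[ℚ] ((Fin m → ℚ) × ℚ) :=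
    { toFun := fun p => (A.mulVec p.1 - p.2 • (fun _ : Fin m => (1:ℚ)), ∑ j, p.1 j)
      map_add' := by
        intro p q
        refine Prod.ext ?_ ?_
        · funext i
          simp [Matrix.mulVec_add, add_smul]
          ring
        · simp [Finset.sum_add_distrib]
      map_smul' := by
        intro c p
        refine Prod.ext ?_ ?_
        · funext i
          simp [Matrix.mulVec_smul, smul_smul, mul_sub]
        · simp [Finset.mul_sum] }
  by_cases hmem : ((0 : Fin m → ℚ), (1 : ℚ)) ∈ LinearMap.range L
  · -- extract a rational solution and use uniqueness
    obtain ⟨⟨v, a⟩, hva⟩ := hmem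
    have hva1 : A.mulVec v - a • (fun _ => (1:ℚ)) = 0 := congrArg Prod.fst hva
    have hva2 : (∑ j, v j) = 1 := congrArg Prod.snd hva
    have hAv : ∀ i, ∑ j, A i j * v j = a := by
      intro i
      have := congrFun hva1 i
      simp [Matrix.mulVec, dotProduct] at this
      linarith
    refine ⟨a, ?_⟩
    have key := h2 (fun j => ((v j : ℚ) : ℂ))
    have hL : (β₁ ⬝ᵥ (A.map (Rat.cast : ℚ → ℂ)).mulVec fun j => ((v j : ℚ) : ℂ)) = (a : ℂ) := by
      have hcol : ∀ i, ((A.map (Rat.cast : ℚ → ℂ)).mulVec fun j => ((v j : ℚ) : ℂ)) i = (a : ℂ) := by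
        intro i
        have := hAv i
        simp [Matrix.mulVec, dotProduct, Matrix.map_apply]
        rw [show (∑ j, (A i j : ℂ) * (v j : ℂ)) = ((∑ j, A i j * v j : ℚ) : ℂ) by push_cast; ring_nf,
          this]
      simp only [dotProduct, hcol]
      rw [← Finset.sum_mul, hβ₁, one_mul]
    have hR : (α * ∑ j, ((v j : ℚ) : ℂ)) = α := by
      rw [show (∑ j, ((v j : ℚ) : ℂ)) = ((∑ j, v j : ℚ) : ℂ) by push_cast; ring_nf, hva2]
      simp
    rw [hL, hR] at key
    exact key.symm
  · -- otherwise produce a rational functional contradicting h1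
    exfalso
    obtain ⟨f, hf0, hfbot⟩ := Submodule.exists_dual_map_eq_bot_of_notMem hmem inferInstance
    have hker : ∀ p, f (L p) = 0 := by
      intro p
      have : f (L p) ∈ (LinearMap.range L).map f := ⟨L p, ⟨p, rfl⟩, rfl⟩
      rw [hfbot] at this
      exact (Submodule.mem_bot ℚ).mp this
    set w : Fin m → ℚ := fun i => f (Pi.single i 1, 0) with hw
    set t : ℚ := f (0, 1) with ht
    have hlin : ∀ x : Fin m → ℚ, f (x, 0) = ∑ i, x i * w i := by
      intro x
      have hx1 : ∑ i, x i • (Pi.single i 1 : Fin m → ℚ) = x := by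
        funext j
        rw [Finset.sum_apply]
        simp [Pi.single_apply]
      have hx : (x, (0:ℚ)) = ∑ i, x i • ((Pi.single i 1 : Fin m → ℚ), (0:ℚ)) := by
        refine Prod.ext ?_ ?_
        · rw [Prod.fst_sum]
          simp only [Prod.smul_fst]
          exact hx1.symm
        · rw [Prod.snd_sum]
          simp
      rw [hx, map_sum]
      refine Finset.sum_congr rfl fun i _ => ?_
      rw [_root_.map_smul, smul_eq_mul]
    have hft : ∀ (x : Fin m → ℚ) (a : ℚ), f (x, a) = (∑ i, x i * w i) + a * t := by
      intro x a
      have : (x, a) = (x, (0:ℚ)) + a • ((0 : Fin m → ℚ), (1:ℚ)) := by ext <;> simp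
      rw [this, map_add, _root_.map_smul, hlin, smul_eq_mul, ht]
    have hsum : ∑ i, w i = 0 := by
      have := hker (0, -1)
      simp only [L, LinearMap.coe_mk, AddHom.coe_mk] at this
      rw [show (A.mulVec (0 : Fin n → ℚ) - (-1 : ℚ) • (fun _ : Fin m => (1:ℚ)), ∑ j, (0 : Fin n → ℚ) j)
          = ((fun (_ : Fin m) => (1:ℚ)), (0:ℚ)) by
        ext i <;> simp [Matrix.mulVec_zero]] at this
      rw [hft] at this
      simpa using this
    have hAt : ∀ j, ∑ i, A i j * w i = -t := by
      intro j
      have := hker (Pi.single j 1, 0)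
      simp only [L, LinearMap.coe_mk, AddHom.coe_mk] at this
      rw [show (A.mulVec (Pi.single j 1) - (0:ℚ) • (fun _ : Fin m => (1:ℚ)), ∑ k, (Pi.single j 1 : Fin n → ℚ) k)
          = ((fun i => A i j), (1:ℚ)) by
        ext i <;> simp [Matrix.mulVec_single]] at this
      rw [hft] at this
      linarith [this]
    have key := h1 (fun i => ((w i : ℚ) : ℂ))
    have hL : ((fun i => ((w i : ℚ) : ℂ)) ⬝ᵥ (A.map (Rat.cast : ℚ → ℂ)).mulVec β₂) = -(t:ℂ) := by
      simp only [dotProduct, Matrix.mulVec, Matrix.map_apply]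
      have step : ∑ i, (w i : ℂ) * ∑ j, (A i j : ℂ) * β₂ j
          = ∑ j, ((∑ i, A i j * w i : ℚ) : ℂ) * β₂ j := by
        calc ∑ i, (w i : ℂ) * ∑ j, (A i j : ℂ) * β₂ j
            = ∑ i, ∑ j, (w i : ℂ) * ((A i j : ℂ) * β₂ j) := by simp [Finset.mul_sum]
          _ = ∑ j, ∑ i, (w i : ℂ) * ((A i j : ℂ) * β₂ j) := Finset.sum_comm
          _ = ∑ j, ((∑ i, A i j * w i : ℚ) : ℂ) * β₂ j := by
              refine Finset.sum_congr rfl fun j _ => ?_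
              push_cast
              rw [Finset.sum_mul]
              refine Finset.sum_congr rfl fun i _ => ?_
              ring
      rw [step]
      simp only [hAt]
      push_cast
      rw [← Finset.mul_sum, hβ₂, mul_one]
    have hR : (α * ∑ i, ((w i : ℚ) : ℂ)) = 0 := by
      rw [show (∑ i, ((w i : ℚ) : ℂ)) = ((∑ i, w i : ℚ) : ℂ) by push_cast; ring_nf, hsum]
      simp
    rw [hL, hR] at key
    have : t = 0 := by exact_mod_cast (neg_eq_zero.mp key)
    exact hf0 (by simpa [ht] using this)
end

section
/- Every rational number α with 0 ≤ α ≤ 1 is 2-cooperative: there exists a {0,1}-matrix A of some format m×n and stochastic vectors β₁ ∈ ℝᵐ, β₂ ∈ ℝⁿ such that A(x,β₂) = α·(Σᵢ xᵢ) for all x and A(β₁,y) = α·(Σⱼ yⱼ) for all y. -/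
open Matrix BigOperators

/-- every rational `α ∈ [0,1]` is 2-cooperative: it is a mystery-value of
some `{0,1}`-matrix with stochastic mystery-vectors. -/
theorem robust_coin_flipping_stmt4
    (α : ℚ) (h0 : 0 ≤ α) (h1 : α ≤ 1) :
    ∃ (m n : ℕ) (A : Matrix (Fin m) (Fin n) ℝ) (β₁ : Fin m → ℝ) (β₂ : Fin n → ℝ),
      (∀ i j, A i j = 0 ∨ A i j = 1) ∧
      (∀ i, 0 ≤ β₁ i) ∧ (∑ i, β₁ i = 1) ∧
      (∀ j, 0 ≤ β₂ j) ∧ (∑ j, β₂ j = 1) ∧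
      (∀ x : Fin m → ℝ, x ⬝ᵥ A.mulVec β₂ = (α : ℝ) * ∑ i, x i) ∧
      (∀ y : Fin n → ℝ, β₁ ⬝ᵥ A.mulVec y = (α : ℝ) * ∑ j, y j) := by
  set d := α.den with hdd
  set a := α.num.toNat with haa
  have hd : 0 < d := α.pos
  haveI : NeZero d := ⟨hd.ne'⟩
  have hnum : (a : ℤ) = α.num := Int.toNat_of_nonneg (Rat.num_nonneg.mpr h0)
  have had : a ≤ d := by
    have h2 : (α.num : ℚ) ≤ (α.den : ℚ) := by
      rw [← α.num_div_den] at h1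
      have hdpos : (0:ℚ) < (α.den : ℚ) := by exact_mod_cast α.pos
      have := (div_le_one hdpos).mp h1
      exact this
    have h3 : α.num ≤ (d : ℤ) := by exact_mod_cast h2
    omega
  have hcast : (α : ℝ) = (a : ℝ) / (d : ℝ) := by
    rw [Rat.cast_def, ← hnum]; push_cast; ring
  have key : ∀ i : Fin d, ∑ j : Fin d,
      (if (((i + j : Fin d)) : ℕ) < a then (1:ℝ) else 0) = a := by
    intro i
    rw [Fintype.sum_equiv (Equiv.addLeft i)
      (fun j => if (((i + j : Fin d)) : ℕ) < a then (1:ℝ) else 0)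
      (fun j => if ((j : Fin d) : ℕ) < a then (1:ℝ) else 0) (fun j => rfl)]
    rw [Fin.sum_univ_eq_sum_range (fun j => if j < a then (1:ℝ) else 0) d]
    rw [Finset.range_eq_Ico, ← Finset.sum_Ico_consecutive _ (Nat.zero_le a) had]
    rw [Finset.sum_congr rfl (fun j hj => if_pos (Finset.mem_Ico.mp hj).2),
      Finset.sum_congr rfl (g := fun _ => (0:ℝ))
        (fun j hj => if_neg (by simpa using (Finset.mem_Ico.mp hj).1))]
    simp
  have colkey : ∀ j : Fin d, ∑ i : Fin d,
      (if (((i + j : Fin d)) : ℕ) < a then (1:ℝ) else 0) = a := by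
    intro j
    simpa [add_comm] using key j
  refine ⟨d, d, fun i j => if (((i + j : Fin d)) : ℕ) < a then 1 else 0,
    fun _ => 1 / d, fun _ => 1 / d, ?_, ?_, ?_, ?_, ?_, ?_, ?_⟩
  · intro i j; by_cases h : (((i + j : Fin d)) : ℕ) < a <;> simp [h]
  · intro i; positivity
  · simp [Finset.sum_const, Finset.card_univ]
  · intro j; positivity
  · simp [Finset.sum_const, Finset.card_univ]
  · intro x
    simp only [Matrix.mulVec, dotProduct]
    calc ∑ i : Fin d, x i * ∑ j : Fin d,
          (if (((i + j : Fin d)) : ℕ) < a then (1:ℝ) else 0) * (1 / d)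
        = ∑ i : Fin d, x i * ((a : ℝ) / d) := by
          refine Finset.sum_congr rfl fun i _ => ?_
          rw [← Finset.sum_mul, key i]; ring
      _ = (α : ℝ) * ∑ i, x i := by
          rw [hcast, ← Finset.sum_mul]; ring
  · intro x
    simp only [Matrix.mulVec, dotProduct]
    calc ∑ i : Fin d, (1 / (d:ℝ)) * ∑ j : Fin d,
          (if (((i + j : Fin d)) : ℕ) < a then (1:ℝ) else 0) * x j
        = ∑ j : Fin d, ∑ i : Fin d, (1 / (d:ℝ)) *
            ((if (((i + j : Fin d)) : ℕ) < a then (1:ℝ) else 0) * x j) := by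
          simp only [Finset.mul_sum]
          rw [Finset.sum_comm]
      _ = ∑ j : Fin d, (1 / (d:ℝ)) * ((a : ℝ) * x j) := by
          refine Finset.sum_congr rfl fun j _ => ?_
          rw [← Finset.mul_sum, ← Finset.sum_mul, colkey j]
      _ = (α : ℝ) * ∑ j, x j := by
          rw [hcast, Finset.mul_sum]
          exact Finset.sum_congr rfl fun j _ => by ring
end

section
/- Let λ be a real algebraic number of degree n. Then there exists a matrix M ∈ Mₙ(ℚ) having λ as an eigenvalue with a right eigenvector v and a left eigenvector w such that all entries of v and w are strictly positive and wᵀv ≠ 0. -/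
/-!
Let `p` be the minimal polynomial of `λ` and `L` the matrix of multiplication by `λ` on `ℚ(λ)`
in some `ℚ`-basis `b`. The real vector `b` itself is a left eigenvector of `L` for `λ`, and
`q(L) e` is a right one, where `q = p / (X - λ)` and `e` are the coordinates of `1`; their
pairing is `q(λ) = p'(λ)`, which is nonzero because `p` is separable.

To make both eigenvectors positive, conjugate `L` by a rational matrix `P`: the eigenvectors
become `P v` and `wᵀ P⁻¹`. Since `GL_n(ℝ)` acts transitively on pairs `(w, v)` with a fixed
pairing `wᵀ v > 0`, some real `G` sends `v` and `w` to positive multiples of `(1, …, 1)`; positivity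
is an open condition, so a rational `P` close to `G` still works.
-/

open Matrix Module Polynomial IntermediateField

section Eigenvectors

variable {S ι : Type*} [CommRing S] [Fintype ι] [DecidableEq ι]

lemma Matrix.vecMul_pow_of_vecMul_eq_smul {M : Matrix ι ι S} {w : ι → S} {μ : S}
    (h : w ᵥ* M = μ • w) (n : ℕ) : w ᵥ* M ^ n = μ ^ n • w := by
  induction n with
  | zero => simp
  | succ n ih => rw [pow_succ, ← vecMul_vecMul, ih, smul_vecMul, h, smul_smul, pow_succ]

lemma Matrix.vecMul_aeval_of_vecMul_eq_smul {M : Matrix ι ι S} {w : ι → S} {μ : S}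
    (h : w ᵥ* M = μ • w) (q : S[X]) : w ᵥ* aeval M q = q.eval μ • w := by
  induction q using Polynomial.induction_on' with
  | add p q hp hq => rw [map_add, vecMul_add, hp, hq, eval_add, add_smul]
  | monomial n c =>
    rw [aeval_monomial, Algebra.algebraMap_eq_smul_one, smul_mul_assoc, one_mul, vecMul_smul,
      vecMul_pow_of_vecMul_eq_smul h, eval_monomial, smul_smul, mul_comm]

lemma Matrix.eigenvectors_conj {P Q M : Matrix ι ι S} (hQP : Q * P = 1) {v w : ι → S} {μ : S}
    (hv : M *ᵥ v = μ • v) (hw : w ᵥ* M = μ • w) :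
    (P * M * Q) *ᵥ (P *ᵥ v) = μ • (P *ᵥ v) ∧ (w ᵥ* Q) ᵥ* (P * M * Q) = μ • (w ᵥ* Q) ∧
      (w ᵥ* Q) ⬝ᵥ (P *ᵥ v) = w ⬝ᵥ v := by
  refine ⟨?_, ?_, ?_⟩
  · rw [mulVec_mulVec, mul_assoc, hQP, mul_one, ← mulVec_mulVec, hv, mulVec_smul]
  · rw [vecMul_vecMul, ← mul_assoc, ← mul_assoc, hQP, one_mul, ← vecMul_vecMul, hw, smul_vecMul]
  · rw [dotProduct_mulVec, vecMul_vecMul, hQP, vecMul_one]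

end Eigenvectors

lemma Polynomial.eval_divByMonic_X_sub_C {R : Type*} [CommRing R] (p : R[X]) (a : R) :
    (p /ₘ (X - C a)).eval a = p.derivative.eval a := by
  simpa using congrArg (eval a) (divByMonic_add_X_sub_C_mul_derivative_divByMonic_eq_derivative p a)

section LeftMulMatrix

variable {R A S ι : Type*} [CommRing R] [CommRing A] [Algebra R A] [CommRing S] [Algebra R S]
  [Fintype ι] (b : Basis ι R A) (σ : A →ₐ[R] S)

lemma vecMul_map_leftMulMatrix [DecidableEq ι] (a : A) :
    (σ ∘ b) ᵥ* (Algebra.leftMulMatrix b a).map (algebraMap R S) = σ a • (σ ∘ b) := by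
  ext j
  conv_rhs => rw [Pi.smul_apply, smul_eq_mul, Function.comp_apply, ← map_mul,
    ← b.sum_repr (a * b j), map_sum]
  simp [vecMul, dotProduct, Algebra.leftMulMatrix_eq_repr_mul, Algebra.smul_def, mul_comm]

lemma dotProduct_map_repr_one : (σ ∘ b) ⬝ᵥ (algebraMap R S ∘ b.repr 1) = 1 := by
  conv_rhs => rw [← map_one σ, ← b.sum_repr 1, map_sum]
  simp [dotProduct, Algebra.smul_def, mul_comm]

lemma aeval_map_leftMulMatrix [DecidableEq ι] {a : A} {p : R[X]} (hp : aeval a p = 0) :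
    aeval ((Algebra.leftMulMatrix b a).map (algebraMap R S)) (p.map (algebraMap R S)) = 0 := by
  rw [aeval_map_algebraMap, show (Algebra.leftMulMatrix b a).map (algebraMap R S) =
    (Algebra.ofId R S).mapMatrix.comp (Algebra.leftMulMatrix b) a from rfl, aeval_algHom_apply,
    hp, map_zero]

theorem exists_eigenvectors_map_leftMulMatrix [DecidableEq ι] (a : A) {p : R[X]}
    (hp : aeval a p = 0) :
    ∃ v w : ι → S,
      (Algebra.leftMulMatrix b a).map (algebraMap R S) *ᵥ v = σ a • v ∧
      w ᵥ* (Algebra.leftMulMatrix b a).map (algebraMap R S) = σ a • w ∧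
      w ⬝ᵥ v = aeval (σ a) (derivative p) := by
  set L := (Algebra.leftMulMatrix b a).map (algebraMap R S)
  set q := p.map (algebraMap R S) /ₘ (X - C (σ a))
  have hroot : IsRoot (p.map (algebraMap R S)) (σ a) := by
    rw [IsRoot, eval_map_algebraMap, aeval_algHom_apply, hp, map_zero]
  have hL : L * aeval L q = σ a • aeval L q := by
    have h := aeval_map_leftMulMatrix b hp (S := S)
    rwa [← mul_divByMonic_eq_iff_isRoot.mpr hroot, map_mul, map_sub, aeval_X, aeval_C,
      Algebra.algebraMap_eq_smul_one, sub_mul, smul_mul_assoc, one_mul, sub_eq_zero] at h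
  refine ⟨aeval L q *ᵥ (algebraMap R S ∘ b.repr 1), σ ∘ b, ?_, vecMul_map_leftMulMatrix b σ a, ?_⟩
  · rw [mulVec_mulVec, hL, smul_mulVec]
  · rw [dotProduct_mulVec, vecMul_aeval_of_vecMul_eq_smul (vecMul_map_leftMulMatrix b σ a),
      smul_dotProduct, dotProduct_map_repr_one, smul_eq_mul, mul_one, eval_divByMonic_X_sub_C,
      derivative_map, eval_map_algebraMap]

end LeftMulMatrix

theorem IsSeparable.exists_eigenvectors_dotProduct_ne_zero {K L : Type*} [Field K] [Field L]
    [Algebra K L] {x : L} (hx : IsIntegral K x) (hsep : IsSeparable K x) :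
    ∃ (M : Matrix (Fin (minpoly K x).natDegree) (Fin (minpoly K x).natDegree) K)
      (v w : Fin (minpoly K x).natDegree → L),
      M.map (algebraMap K L) *ᵥ v = x • v ∧ w ᵥ* M.map (algebraMap K L) = x • w ∧
      w ⬝ᵥ v ≠ 0 := by
  have := adjoin.finiteDimensional hx
  obtain ⟨v, w, hv, hw, hwv⟩ := exists_eigenvectors_map_leftMulMatrix
    (finBasisOfFinrankEq K K⟮x⟯ (adjoin.finrank hx)) (val _) (AdjoinSimple.gen K x)
    (aeval_gen_minpoly K x)
  exact ⟨_, v, w, hv, hw, hwv ▸ hsep.aeval_derivative_ne_zero (minpoly.aeval K x)⟩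

lemma Module.Dual.exists_linearEquiv_apply_eq {K V : Type*} [Field K] [AddCommGroup V]
    [Module K V] [FiniteDimensional K V] {f f' : Dual K V} {v v' : V} (h : f' v' = f v)
    (hv : f v ≠ 0) :
    ∃ g : V ≃ₗ[K] V, g v = v' ∧ ∀ x, f' (g x) = f x := by
  have hf : f ≠ 0 := fun hf ↦ hv (by simp [hf])
  have hf' : f' ≠ 0 := fun hf' ↦ hv (by simp [← h, hf'])
  let e : LinearMap.ker f ≃ₗ[K] LinearMap.ker f' := LinearEquiv.ofFinrankEq _ _ <| by
    have := f.finrank_ker_add_one_of_ne_zero hf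
    have := f'.finrank_ker_add_one_of_ne_zero hf'
    omega
  let π : V →ₗ[K] LinearMap.ker f :=
    (LinearMap.id - (f v)⁻¹ • f.smulRight v).codRestrict _ fun x ↦ by simp [field]
  have hπ : ∀ x, (π x : V) = x - (f v)⁻¹ • f x • v := fun x ↦ rfl
  let g : V →ₗ[K] V := (f v)⁻¹ • f.smulRight v' + (LinearMap.ker f').subtype ∘ₗ e ∘ₗ π
  have hg : ∀ x, f' (g x) = f x := fun x ↦ by
    have := (e (π x)).2
    rw [LinearMap.mem_ker] at this
    simp [g, this, h, field]
  have hinj : Function.Injective g := by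
    refine (injective_iff_map_eq_zero g).mpr fun x hx ↦ ?_
    have hfx : f x = 0 := by rw [← hg, hx, map_zero]
    have hπx : π x = 0 := by simpa [g, hfx] using hx
    simpa [hπ, hfx] using congrArg Subtype.val hπx
  refine ⟨LinearEquiv.ofInjectiveEndo g hinj, ?_, hg⟩
  have hπv : π v = 0 := Subtype.ext (by simp [hπ, hv])
  simp [g, hπv, hv]

lemma isOpen_setOf_forall_pos {X α ι : Type*} [TopologicalSpace X] [TopologicalSpace α]
    [LinearOrder α] [ClosedIicTopology α] [Zero α] [Finite ι] {F : X → ι → α}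
    (hF : Continuous F) : IsOpen {x | ∀ i, 0 < F x i} := by
  simpa [Set.pi, Set.preimage] using
    (isOpen_set_pi Set.finite_univ fun _ _ ↦ isOpen_Ioi (a := (0 : α))).preimage hF

section Positivity

variable {ι : Type*} [Fintype ι] [DecidableEq ι]

/-- `G` sends `v` to `(1, …, 1)` and `w` to `(c, …, c)` with `c = (w ⬝ᵥ v) / n`. -/
lemma exists_isUnit_mulVec_pos_vecMul_inv_pos {K : Type*} [Field K] [LinearOrder K]
    [IsStrictOrderedRing K] {v w : ι → K} (h : 0 < w ⬝ᵥ v) :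
    ∃ G : Matrix ι ι K, IsUnit G ∧ (∀ i, 0 < (G *ᵥ v) i) ∧ ∀ i, 0 < (w ᵥ* G⁻¹) i := by
  have : Nonempty ι := by
    by_contra hι
    simp [not_nonempty_iff.mp hι, dotProduct] at h
  set c := w ⬝ᵥ v / Fintype.card ι
  have hc : 0 < c := div_pos h (by simp [Fintype.card_pos])
  obtain ⟨g, hgv, hg⟩ := Module.Dual.exists_linearEquiv_apply_eq
    (f := dotProductEquiv K ι w) (f' := dotProductEquiv K ι fun _ ↦ c) (v := v) (v' := fun _ ↦ 1)
    (by simp [dotProduct, c, field]) h.ne'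
  set G := LinearMap.toMatrix' (g : (ι → K) →ₗ[K] ι → K)
  have hG : IsUnit G :=
    LinearMap.isUnit_toMatrix'_iff.mpr ((Module.End.isUnit_iff _).mpr g.bijective)
  have hcG : (fun _ ↦ c) ᵥ* G = w := (dotProductEquiv K ι).injective <| LinearMap.ext fun x ↦ by
    simpa [← dotProduct_mulVec, G] using hg x
  refine ⟨G, hG, fun i ↦ by simp [G, hgv], fun i ↦ ?_⟩
  rw [← hcG, vecMul_vecMul, mul_nonsing_inv _ ((isUnit_iff_isUnit_det G).mp hG), vecMul_one]
  exact hc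

lemma exists_rat_isUnit_mulVec_pos_vecMul_inv_pos {v w : ι → ℝ} (h : 0 < w ⬝ᵥ v) :
    ∃ P : Matrix ι ι ℚ, IsUnit P ∧ (∀ i, 0 < (P.map (Rat.cast : ℚ → ℝ) *ᵥ v) i) ∧
      ∀ i, 0 < (w ᵥ* (P.map (Rat.cast : ℚ → ℝ))⁻¹) i := by
  set U : Set (Matrix ι ι ℝ) := {G | G.det ≠ 0} ∩ Inv.inv ⁻¹' {H | ∀ i, 0 < (w ᵥ* H) i} ∩
    {G | ∀ i, 0 < (G *ᵥ v) i}
  have hinv : ContinuousOn (Inv.inv : Matrix ι ι ℝ → Matrix ι ι ℝ) {G | G.det ≠ 0} :=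
    fun G hG ↦ (continuousAt_matrix_inv G
      (by simpa [Ring.inverse_eq_inv'] using continuousAt_inv₀ hG)).continuousWithinAt
  have hU : IsOpen U :=
    (hinv.isOpen_inter_preimage (isOpen_ne_fun continuous_id.matrix_det continuous_const)
      (isOpen_setOf_forall_pos (continuous_const.matrix_vecMul continuous_id))).inter
      (isOpen_setOf_forall_pos (continuous_id.matrix_mulVec continuous_const))
  obtain ⟨G, hG, hGv, hGw⟩ := exists_isUnit_mulVec_pos_vecMul_inv_pos h
  have hdense : DenseRange fun P : Matrix ι ι ℚ ↦ P.map (Rat.cast : ℚ → ℝ) :=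
    DenseRange.piMap fun _ ↦ DenseRange.piMap fun _ ↦ Rat.denseRange_cast
  obtain ⟨P, ⟨hdet, hPw⟩, hPv⟩ := hdense.exists_mem_open hU
    ⟨G, ⟨(isUnit_iff_isUnit_det G).mp hG |>.ne_zero, hGw⟩, hGv⟩
  refine ⟨P, (isUnit_iff_isUnit_det P).mpr (isUnit_iff_ne_zero.mpr fun h0 ↦ hdet ?_), hPv, hPw⟩
  simpa [h0] using (RingHom.map_det (Rat.castHom ℝ) P).symm

end Positivity

/-- for a real algebraic number `λ` of degree `n`, there is a rational
`n × n` matrix with `λ` as an eigenvalue, whose corresponding right and left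
eigenvectors can be taken entrywise positive and non-orthogonal. -/
theorem robust_coin_flipping_stmt6
    (lam : ℝ) (halg : IsAlgebraic ℚ lam)
    (n : ℕ) (hn : n = (minpoly ℚ lam).natDegree) :
    ∃ (M : Matrix (Fin n) (Fin n) ℚ) (v w : Fin n → ℝ),
      (M.map (Rat.cast : ℚ → ℝ)).mulVec v = lam • v ∧
      (M.map (Rat.cast : ℚ → ℝ)).vecMul w = lam • w ∧
      (∀ i, 0 < v i) ∧ (∀ i, 0 < w i) ∧
      w ⬝ᵥ v ≠ 0 := by
  subst hn
  obtain ⟨M, v, w, hv, hw, hwv⟩ := IsSeparable.exists_eigenvectors_dotProduct_ne_zero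
    halg.isIntegral (minpoly.irreducible halg.isIntegral).separable
  set f : Matrix (Fin _) (Fin _) ℚ →+* Matrix (Fin _) (Fin _) ℝ := (Rat.castHom ℝ).mapMatrix
  -- rescaling `w` by `w ⬝ᵥ v` makes the pairing positive
  set w' := (w ⬝ᵥ v) • w
  have hw' : w' ᵥ* f M = lam • w' := by
    rw [smul_vecMul, show f M = M.map (algebraMap ℚ ℝ) from rfl, hw, smul_comm]
  have hpos : 0 < w' ⬝ᵥ v := by
    rw [smul_dotProduct, smul_eq_mul]
    exact mul_self_pos.mpr hwv
  obtain ⟨P, hP, hPv, hPw⟩ := exists_rat_isUnit_mulVec_pos_vecMul_inv_pos hpos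
  have hQP : f P⁻¹ * f P = 1 := by
    rw [← map_mul, nonsing_inv_mul _ ((isUnit_iff_isUnit_det P).mp hP), map_one]
  obtain ⟨hMv, hMw, hwv'⟩ := eigenvectors_conj hQP hv hw'
  refine ⟨P * M * P⁻¹, f P *ᵥ v, w' ᵥ* f P⁻¹, ?_, ?_, hPv, ?_, hwv'.symm ▸ hpos.ne'⟩
  · change f (P * M * P⁻¹) *ᵥ _ = _
    rwa [map_mul, map_mul]
  · change _ ᵥ* f (P * M * P⁻¹) = _
    rwa [map_mul, map_mul]
  · rwa [← inv_eq_left_inv hQP]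
end

section
/- Refinement lemma: Let β ∈ ℝᵏ be a vector with strictly positive entries summing to 1, and let δ > 0. Then there exist positive integers n₁, …, n_k with sum n such that the refined vector β′, obtained by replacing each coordinate βᵢ by nᵢ equal coordinates βᵢ/nᵢ, satisfies min over all coordinates of β′ ≥ (1−δ)/n. -/
open BigOperators

/-- Refinement lemma: any positive vector of total mass 1 admits a
refinement, splitting the `i`-th coordinate into `m i` equal pieces, all of whose
coordinates are at least `(1 − δ)/n` where `n` is the total number of pieces. -/
theorem robust_coin_flipping_stmt7
    {k : ℕ} (β : Fin k → ℝ) (hpos : ∀ i, 0 < β i) (hsum : ∑ i, β i = 1)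
    (δ : ℝ) (hδ : 0 < δ) :
    ∃ m : Fin k → ℕ, (∀ i, 0 < m i) ∧
      ∀ i, (1 - δ) / (∑ j, (m j : ℝ)) ≤ β i / (m i : ℝ) := by
  rcases Nat.eq_zero_or_pos k with hk | hk
  · subst hk
    exact ⟨fun i => i.elim0, fun i => i.elim0, fun i => i.elim0⟩
  -- k > 0
  have hne : Nonempty (Fin k) := ⟨⟨0, hk⟩⟩
  obtain ⟨i₀, -, hmin⟩ := Finset.exists_min_image Finset.univ β ⟨⟨0, hk⟩, Finset.mem_univ _⟩
  set b := β i₀ with hb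
  have hbpos : 0 < b := hpos i₀
  obtain ⟨N, hN⟩ := exists_nat_ge (max 1 (1 / (δ * b)))
  have hN1 : (1 : ℝ) ≤ N := le_trans (le_max_left _ _) hN
  have hNb : 1 / (δ * b) ≤ N := le_trans (le_max_right _ _) hN
  have hNbig : 1 ≤ δ * b * N := by
    rw [div_le_iff₀ (mul_pos hδ hbpos)] at hNb
    linarith
  refine ⟨fun i => ⌈(N : ℝ) * β i⌉₊, fun i => ?_, fun i => ?_⟩
  · have : (0 : ℝ) < N * β i := mul_pos (by linarith) (hpos i)
    exact Nat.ceil_pos.mpr this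
  · set m : Fin k → ℕ := fun i => ⌈(N : ℝ) * β i⌉₊ with hm
    have hmi_pos : ∀ j, (0 : ℝ) < m j := by
      intro j
      exact_mod_cast Nat.ceil_pos.mpr (mul_pos (by linarith : (0:ℝ) < N) (hpos j))
    have hlow : ∀ j, (N : ℝ) * β j ≤ m j := fun j => Nat.le_ceil _
    have hup : (m i : ℝ) ≤ N * β i + 1 :=
      le_of_lt (Nat.ceil_lt_add_one (le_of_lt (mul_pos (by linarith : (0:ℝ) < N) (hpos i))))
    have hnsum : (N : ℝ) ≤ ∑ j, (m j : ℝ) := by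
      calc (N : ℝ) = N * ∑ j, β j := by rw [hsum]; ring
        _ = ∑ j, (N : ℝ) * β j := by rw [Finset.mul_sum]
        _ ≤ ∑ j, (m j : ℝ) := Finset.sum_le_sum fun j _ => hlow j
    have hnpos : (0 : ℝ) < ∑ j, (m j : ℝ) := lt_of_lt_of_le (by linarith) hnsum
    rw [div_le_div_iff₀ hnpos (hmi_pos i)]
    rcases le_or_gt 1 δ with h1 | h1
    · have : (1 - δ) * m i ≤ 0 := mul_nonpos_of_nonpos_of_nonneg (by linarith) (le_of_lt (hmi_pos i))
      have : (0:ℝ) ≤ β i * ∑ j, (m j : ℝ) := le_of_lt (mul_pos (hpos i) hnpos)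
      linarith
    · have hbi : b ≤ β i := hmin i (Finset.mem_univ i)
      have key : (1 - δ) * (N * β i + 1) ≤ β i * N := by
        have h2 : 1 ≤ δ * β i * N := le_trans hNbig (by nlinarith)
        nlinarith
      calc (1 - δ) * m i ≤ (1 - δ) * (N * β i + 1) := by nlinarith
        _ ≤ β i * N := key
        _ ≤ β i * ∑ j, (m j : ℝ) := by nlinarith [hpos i]
end

section
/- Bureaucracy lemma: For every odd p ≥ 1 there exists a Boolean function g: {0,1}ᵖ → {0,1} computing the majority of its inputs (g(t)=1 if more than half the tᵢ equal 1, g(t)=0 if more than half equal 0) which can be expressed as a composition of ternary majority gates arranged in a balanced ternary tree, with each leaf of the tree labeled by one of the p input variables. -/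
/-- The ternary majority gate. -/
def maj3 (a b c : Bool) : Bool := (a && b) || (a && c) || (b && c)

/-- Evaluate a balanced ternary tree of `maj3` gates of depth `d`, whose leaves
(indexed by ternary strings `Fin d → Fin 3`) are labeled with input indices by `s`,
on the input assignment `t`. -/
def evalTree {p : ℕ} : (d : ℕ) → ((Fin d → Fin 3) → Fin p) → (Fin p → Bool) → Bool
  | 0, s, t => t (s (fun i => i.elim0))
  | d + 1, s, t =>
      maj3 (evalTree d (fun ℓ => s (Fin.cons 0 ℓ)) t)
           (evalTree d (fun ℓ => s (Fin.cons 1 ℓ)) t)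
           (evalTree d (fun ℓ => s (Fin.cons 2 ℓ)) t)

lemma maj3_idem (a : Bool) : maj3 a a a = a := by cases a <;> rfl
lemma maj3_true (a b : Bool) : maj3 true a b = (a || b) := by cases a <;> cases b <;> rfl
lemma maj3_false (a b : Bool) : maj3 false a b = (a && b) := by cases a <;> cases b <;> rfl

inductive MForm (p : ℕ) : Type where
  | leaf : Fin p → MForm p
  | node : MForm p → MForm p → MForm p → MForm p

def MForm.eval {p : ℕ} (t : Fin p → Bool) : MForm p → Bool
  | .leaf i => t i
  | .node a b c => maj3 (a.eval t) (b.eval t) (c.eval t)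

lemma evalTree_pad {p : ℕ} (d : ℕ) (s : (Fin d → Fin 3) → Fin p) (t : Fin p → Bool) :
    evalTree (d+1) (fun ℓ => s (fun i => ℓ i.succ)) t = evalTree d s t := by
  simp only [evalTree, Fin.cons_succ]
  exact maj3_idem _

lemma evalTree_padN {p : ℕ} (n d : ℕ) (s : (Fin d → Fin 3) → Fin p) :
    ∃ s' : (Fin (d+n) → Fin 3) → Fin p, ∀ t, evalTree (d+n) s' t = evalTree d s t := by
  induction n with
  | zero => exact ⟨s, fun t => rfl⟩
  | succ n ih =>
    obtain ⟨s', hs'⟩ := ih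
    exact ⟨fun ℓ => s' (fun i => ℓ i.succ), fun t => (evalTree_pad (d+n) s' t).trans (hs' t)⟩

lemma evalTree_upgrade {p : ℕ} (d e : ℕ) (h : d ≤ e) (s : (Fin d → Fin 3) → Fin p) :
    ∃ s' : (Fin e → Fin 3) → Fin p, ∀ t, evalTree e s' t = evalTree d s t := by
  obtain ⟨s', hs'⟩ := evalTree_padN (e - d) d s
  rw [show e = d + (e - d) by omega]
  exact ⟨s', hs'⟩

lemma evalTree_node {p d : ℕ} (s1 s2 s3 : (Fin d → Fin 3) → Fin p) :
    ∃ s : (Fin (d+1) → Fin 3) → Fin p, ∀ t,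
      evalTree (d+1) s t = maj3 (evalTree d s1 t) (evalTree d s2 t) (evalTree d s3 t) := by
  refine ⟨fun ℓ => if ℓ 0 = 0 then s1 (fun i => ℓ i.succ)
      else if ℓ 0 = 1 then s2 (fun i => ℓ i.succ)
      else s3 (fun i => ℓ i.succ), fun t => ?_⟩
  simp only [evalTree, Fin.cons_zero, Fin.cons_succ,
    show (1:Fin 3) ≠ 0 by decide, show (2:Fin 3) ≠ 0 by decide,
    show (2:Fin 3) ≠ 1 by decide, if_true, if_false, ite_true, ite_false]

lemma exists_tree {p : ℕ} (F : MForm p) :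
    ∃ (d : ℕ) (s : (Fin d → Fin 3) → Fin p), ∀ t, evalTree d s t = F.eval t := by
  induction F with
  | leaf i => exact ⟨0, fun _ => i, fun t => rfl⟩
  | node F1 F2 F3 ih1 ih2 ih3 =>
    obtain ⟨d1, s1, h1⟩ := ih1
    obtain ⟨d2, s2, h2⟩ := ih2
    obtain ⟨d3, s3, h3⟩ := ih3
    set d := max d1 (max d2 d3) with hd
    obtain ⟨s1', hs1⟩ := evalTree_upgrade d1 d (by omega) s1
    obtain ⟨s2', hs2⟩ := evalTree_upgrade d2 d (by omega) s2
    obtain ⟨s3', hs3⟩ := evalTree_upgrade d3 d (by omega) s3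
    obtain ⟨s, hs⟩ := evalTree_node s1' s2' s3'
    exact ⟨d+1, s, fun t => by
      rw [hs t, hs1 t, hs2 t, hs3 t, h1 t, h2 t, h3 t]; rfl⟩

def cnt {m : ℕ} (z : Fin m → Bool) : ℕ := (Finset.univ.filter fun i => z i = true).card

lemma cnt_eq_sum {m : ℕ} (z : Fin m → Bool) :
    cnt z = ∑ j, (if z j = true then 1 else 0) := Finset.card_filter _ _

lemma cnt_le {m : ℕ} (z : Fin m → Bool) : cnt z ≤ m :=
  le_trans (Finset.card_filter_le _ _) (by simp)

lemma cnt_update_add {m : ℕ} (z : Fin m → Bool) (i : Fin m) (b : Bool) :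
    cnt (Function.update z i b) + (if z i = true then 1 else 0)
      = cnt z + (if b = true then 1 else 0) := by
  classical
  rw [cnt_eq_sum, cnt_eq_sum]
  have hf : (fun j => if Function.update z i b j = true then (1:ℕ) else 0)
      = Function.update (fun j => if z j = true then (1:ℕ) else 0) i (if b = true then 1 else 0) := by
    funext j
    rw [Function.update_apply, Function.update_apply]
    by_cases h : j = i <;> simp [h]
  rw [hf]
  rw [Finset.sum_update_of_mem (Finset.mem_univ i)]
  rw [Finset.sum_eq_sum_sdiff_singleton_add (Finset.mem_univ i)
    (fun j => if z j = true then (1:ℕ) else 0)]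
  omega

lemma exists_true_of_cnt_pos {m : ℕ} (z : Fin m → Bool) (h : 1 ≤ cnt z) :
    ∃ i, z i = true := by
  obtain ⟨i, hi⟩ := Finset.card_pos.mp h
  exact ⟨i, (Finset.mem_filter.mp hi).2⟩

lemma exists_false_of_cnt_lt {m : ℕ} (z : Fin m → Bool) (h : cnt z < m) :
    ∃ i, z i = false := by
  by_contra hc
  push_neg at hc
  have : ∀ i, z i = true := fun i => by
    cases hz : z i
    · exact absurd hz (hc i)
    · rfl
  have : (Finset.univ.filter fun i => z i = true) = Finset.univ :=
    Finset.filter_true_of_mem (fun i _ => this i)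
  have : cnt z = m := by rw [cnt, this]; simp
  omega

lemma cnt_snoc2 {m : ℕ} (y : Fin (m+2) → Bool) :
    cnt y = cnt (fun i : Fin m => y (i.castSucc.castSucc))
            + (if y ((Fin.last m).castSucc) = true then 1 else 0)
            + (if y (Fin.last (m+1)) = true then 1 else 0) := by
  rw [cnt_eq_sum, cnt_eq_sum, Fin.sum_univ_castSucc, Fin.sum_univ_castSucc]

lemma cnt_update_le {m : ℕ} (z : Fin m → Bool) (i : Fin m) (b : Bool) :
    cnt (Function.update z i b) ≤ cnt z + 1 ∧ cnt z ≤ cnt (Function.update z i b) + 1 := by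
  have h2 := cnt_update_add z i b
  by_cases h : z i = true <;> cases b <;> simp [h] at h2 <;> omega

lemma cnt_update_true_of_false {m : ℕ} {z : Fin m → Bool} {i : Fin m} (h : z i = false) :
    cnt (Function.update z i true) = cnt z + 1 := by
  have h2 := cnt_update_add z i true
  simp [h] at h2
  omega

lemma cnt_update_false_of_true {m : ℕ} {z : Fin m → Bool} {i : Fin m} (h : z i = true) :
    cnt (Function.update z i false) + 1 = cnt z := by
  have h2 := cnt_update_add z i false
  simp [h] at h2
  omega

def bigD {p : ℕ} (u : Fin p) (l : List (MForm p)) (init : MForm p) : MForm p :=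
  l.foldr (fun f acc => .node (.leaf u) f acc) init

lemma bigD_eval_true {p : ℕ} (t : Fin p → Bool) (u : Fin p) (h : t u = true)
    (l : List (MForm p)) (init : MForm p) :
    ((bigD u l init).eval t = true ↔ (∃ f ∈ l, f.eval t = true) ∨ init.eval t = true) := by
  induction l with
  | nil => simp [bigD]
  | cons f l ih =>
    have he : (bigD u (f :: l) init).eval t = (f.eval t || (bigD u l init).eval t) := by
      show (MForm.node (.leaf u) f (bigD u l init)).eval t = _
      simp [MForm.eval, h, maj3_true]
    rw [he, Bool.or_eq_true, ih, List.exists_mem_cons_iff, or_assoc]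

lemma bigD_eval_false {p : ℕ} (t : Fin p → Bool) (u : Fin p) (h : t u = false)
    (l : List (MForm p)) (init : MForm p) :
    ((bigD u l init).eval t = true ↔ (∀ f ∈ l, f.eval t = true) ∧ init.eval t = true) := by
  induction l with
  | nil => simp [bigD]
  | cons f l ih =>
    have he : (bigD u (f :: l) init).eval t = (f.eval t && (bigD u l init).eval t) := by
      show (MForm.node (.leaf u) f (bigD u l init)).eval t = _
      simp [MForm.eval, h, maj3_false]
    rw [he, Bool.and_eq_true, ih, List.forall_mem_cons, and_assoc]

lemma maj_formula (p : ℕ) (k : ℕ) : ∀ (x : Fin (2*k+1) → Fin p),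
    ∃ F : MForm p, ∀ t : Fin p → Bool, F.eval t = decide (k + 1 ≤ cnt (t ∘ x)) := by
  induction k with
  | zero =>
    intro x
    refine ⟨.leaf (x 0), fun t => ?_⟩
    have h1 : cnt (t ∘ x) = if t (x 0) = true then 1 else 0 := by
      rw [cnt_eq_sum]; exact Fin.sum_univ_one _
    rw [h1]
    cases h : t (x 0) <;> simp [MForm.eval, h]
  | succ k ih =>
    intro x
    choose G hG using ih
    let u : Fin p := x ((Fin.last (2*k+1)).castSucc)
    let v : Fin p := x (Fin.last (2*k+1+1))
    let x' : Fin (2*k+1) → Fin p := fun i => x (i.castSucc.castSucc)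
    let A : MForm p := G x'
    let L : List (MForm p) := (List.finRange (2*k+1)).map (fun i => G (Function.update x' i u))
    let D : MForm p := bigD u L A
    refine ⟨.node (.leaf u) (.node (.leaf v) D A) (.node (.leaf v) A D), fun t => ?_⟩
    have hA : A.eval t = decide (k+1 ≤ cnt (t ∘ x')) := hG x' t
    have hsub : ∀ i : Fin (2*k+1),
        t ∘ Function.update x' i u = Function.update (t ∘ x') i (t u) := by
      intro i; funext j
      simp only [Function.comp_apply, Function.update_apply]
      by_cases h : j = i <;> simp [h]
    have hcle : cnt (t ∘ x') ≤ 2*k+1 := cnt_le _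
    have hmemL : ∀ f ∈ L, ∃ i : Fin (2*k+1), f = G (Function.update x' i u) := by
      intro f hf
      obtain ⟨i, _, hi⟩ := List.mem_map.mp hf
      exact ⟨i, hi.symm⟩
    have hLmem : ∀ i : Fin (2*k+1), G (Function.update x' i u) ∈ L := by
      intro i; exact List.mem_map.mpr ⟨i, List.mem_finRange i, rfl⟩
    have hDt : t u = true → D.eval t = decide (k ≤ cnt (t ∘ x')) := by
      intro hu
      apply Bool.eq_iff_iff.mpr
      rw [decide_eq_true_eq, bigD_eval_true t u hu L A]
      constructor
      · rintro (⟨f, hf, hfe⟩ | hAe)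
        · obtain ⟨i, rfl⟩ := hmemL f hf
          rw [hG, decide_eq_true_eq, hsub i, hu] at hfe
          have hb := cnt_update_le (t ∘ x') i true
          omega
        · rw [hA, decide_eq_true_eq] at hAe; omega
      · intro hk
        rcases Nat.lt_or_ge (cnt (t ∘ x')) (k+1) with hlt | hge
        · obtain ⟨i, hi⟩ := exists_false_of_cnt_lt (t ∘ x') (by omega)
          left
          refine ⟨G (Function.update x' i u), hLmem i, ?_⟩
          rw [hG, decide_eq_true_eq, hsub i, hu]
          have hb := cnt_update_true_of_false hi
          rw [hb]
          omega
        · right; rw [hA, decide_eq_true_eq]; omega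
    have hDf : t u = false → D.eval t = decide (k + 2 ≤ cnt (t ∘ x')) := by
      intro hu
      apply Bool.eq_iff_iff.mpr
      rw [decide_eq_true_eq, bigD_eval_false t u hu L A]
      constructor
      · rintro ⟨hall, hAe⟩
        rw [hA, decide_eq_true_eq] at hAe
        obtain ⟨i, hi⟩ := exists_true_of_cnt_pos (t ∘ x') (by omega)
        have hfe := hall _ (hLmem i)
        rw [hG, decide_eq_true_eq, hsub i, hu] at hfe
        have hb := cnt_update_false_of_true hi
        omega
      · intro hk
        constructor
        · intro f hf
          obtain ⟨i, rfl⟩ := hmemL f hf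
          rw [hG, decide_eq_true_eq, hsub i, hu]
          have hb := cnt_update_le (t ∘ x') i false
          omega
        · rw [hA, decide_eq_true_eq]; omega
    have hcnty : cnt (t ∘ x) = cnt (t ∘ x')
        + (if t u = true then 1 else 0) + (if t v = true then 1 else 0) :=
      cnt_snoc2 (t ∘ x)
    show maj3 (t u) (maj3 (t v) (D.eval t) (A.eval t)) (maj3 (t v) (A.eval t) (D.eval t))
      = decide (k + 1 + 1 ≤ cnt (t ∘ x))
    cases hu : t u with
    | true =>
      cases hv : t v with
      | true =>
        rw [hu, hv] at hcnty
        norm_num at hcnty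
        rw [maj3_true, maj3_true, maj3_true, hDt hu, hA, hcnty,
          ← Bool.decide_or, ← Bool.decide_or, ← Bool.decide_or]
        exact decide_eq_decide.mpr (by omega)
      | false =>
        rw [hu, hv] at hcnty
        norm_num at hcnty
        rw [maj3_true, maj3_false, maj3_false, hDt hu, hA, hcnty,
          ← Bool.decide_and, ← Bool.decide_and, ← Bool.decide_or]
        exact decide_eq_decide.mpr (by omega)
    | false =>
      cases hv : t v with
      | true =>
        rw [hu, hv] at hcnty
        norm_num at hcnty
        rw [maj3_false, maj3_true, maj3_true, hDf hu, hA, hcnty,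
          ← Bool.decide_or, ← Bool.decide_or, ← Bool.decide_and]
        exact decide_eq_decide.mpr (by omega)
      | false =>
        rw [hu, hv] at hcnty
        norm_num at hcnty
        rw [maj3_false, maj3_false, maj3_false, hDf hu, hA, hcnty,
          ← Bool.decide_and, ← Bool.decide_and, ← Bool.decide_and]
        exact decide_eq_decide.mpr (by omega)

/-- Bureaucracy lemma: for every odd `p ≥ 1` there is a balanced
ternary tree of `maj3` gates, with leaves labeled by input variables, computing the
`p`-ary majority function. -/
theorem robust_coin_flipping_stmt12
    (p : ℕ) (hp : Odd p) (hp1 : 1 ≤ p) :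
    ∃ (d : ℕ) (s : (Fin d → Fin 3) → Fin p),
      ∀ t : Fin p → Bool,
        (2 * (Finset.univ.filter fun i => t i = true).card > p →
          evalTree d s t = true) ∧
        (2 * (Finset.univ.filter fun i => t i = false).card > p →
          evalTree d s t = false) := by
  obtain ⟨k, hk0⟩ := hp
  have hk : p = 2 * k + 1 := by omega
  subst hk
  obtain ⟨F, hF⟩ := maj_formula (2 * k + 1) k (fun i => i)
  obtain ⟨d, s, hds⟩ := exists_tree F
  refine ⟨d, s, fun t => ⟨?_, ?_⟩⟩
  · intro h
    rw [hds t, hF t]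
    apply decide_eq_true
    have hc : cnt (t ∘ fun i => i) = (Finset.univ.filter fun i => t i = true).card := rfl
    omega
  · intro h
    rw [hds t, hF t]
    apply decide_eq_false
    intro hcontra
    have hc : cnt (t ∘ fun i => i) = (Finset.univ.filter fun i => t i = true).card := rfl
    rw [hc] at hcontra
    have hsum : (Finset.univ.filter fun i => t i = true).card
        + (Finset.univ.filter fun i => ¬ (t i = true)).card = 2 * k + 1 := by
      rw [Finset.card_filter_add_card_filter_not]
      simp
    have hff : (Finset.univ.filter fun i : Fin (2*k+1) => t i = false)
        = (Finset.univ.filter fun i => ¬ (t i = true)) :=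
      Finset.filter_congr (fun i _ => by simp)
    rw [hff] at h
    omega
end

section
/- Let A be a p-dimensional hypermatrix with rational entries in [0,1] having mystery-value α with stochastic mystery-vectors. Then by replacing each entry w of A (which is rational, hence 2-cooperative) with a suitable Kronecker-product block built from {0,1}-hypermatrices, one obtains a {0,1}-hypermatrix A′ that has α as a mystery-value with stochastic mystery-vectors. Concretely, for p = 2: if A is an m×n matrix with rational entries in [0,1], each with a {0,1}-matrix realization, then there is a {0,1}-matrix A′ and stochastic vectors β₁′, β₂′ with A′(x, β₂′) = α·J(x) for all x and A′(β₁′, y) = α·J(y) for all y. -/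
/-! The entries of `A` are rational, so `A β₂ = α • 1, ∑ β₂ = 1` is a linear system over `ℚ` in
the unknowns `(β₂, α)` with a real solution. It therefore has a rational solution `(b, a)`, and
pairing `A b = a • 1` with `β₁` gives `α = a`. Hence `α` is a rational number `p / q` in `[0, 1]`,
which is the mystery-value of the `q × q` circulant `{0,1}`-matrix with `p` ones in each row and
column, with uniform mystery-vectors. -/

open Matrix BigOperators

namespace Matrix

variable {ι κ R : Type*} [Fintype κ]

theorem forall_dotProduct_eq_mul_sum_iff [CommSemiring R] (v : κ → R) (c : R) :
    (∀ x : κ → R, x ⬝ᵥ v = c * ∑ i, x i) ↔ v = fun _ => c := by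
  classical
  refine ⟨fun h => funext fun i => ?_, fun h x => ?_⟩
  · simpa using h (Pi.single i 1)
  · simp [h, dotProduct, Finset.mul_sum, mul_comm]

theorem forall_dotProduct_mulVec_eq_mul_sum_iff [Fintype ι] [CommSemiring R]
    (M : Matrix ι κ R) (u : ι → R) (c : R) :
    (∀ y : κ → R, u ⬝ᵥ M *ᵥ y = c * ∑ j, y j) ↔ u ᵥ* M = fun _ => c := by
  simp only [dotProduct_mulVec, ← forall_dotProduct_eq_mul_sum_iff, dotProduct_comm]

theorem mulVec_apply_mem_Icc [Semiring R] [PartialOrder R] [IsOrderedRing R]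
    {M : Matrix ι κ R} (hM : ∀ i j, M i j ∈ Set.Icc 0 1) {β : κ → R} (hβ : β ∈ stdSimplex R κ)
    (i : ι) : (M *ᵥ β) i ∈ Set.Icc 0 1 := by
  refine ⟨Finset.sum_nonneg fun j _ => mul_nonneg (hM i j).1 (hβ.1 j), ?_⟩
  calc (M *ᵥ β) i ≤ ∑ j, β j :=
        Finset.sum_le_sum fun j _ => mul_le_of_le_one_left (hβ.1 j) (hM i j).2
    _ = 1 := hβ.2

theorem exists_mulVec_eq_of_map_mulVec_eq {K L : Type*} [Fintype ι] [Field K] [Field L]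
    (f : K →+* L) (M : Matrix ι κ K) (v : ι → K) {x : κ → L} (hx : M.map f *ᵥ x = f ∘ v) :
    ∃ y, M *ᵥ y = v := by
  classical
  -- Fredholm alternative: otherwise `w ⬝ᵥ ·` vanishes on the columns of `M` but not at `v`,
  -- and mapping to `L` contradicts `hx`.
  by_contra! hv
  obtain ⟨φ, hφv, hφM⟩ := Submodule.exists_le_ker_of_notMem (p := LinearMap.range M.mulVecLin)
    (v := v) (by rintro ⟨y, hy⟩; exact hv y hy)
  set w := (dotProductEquiv K ι).symm φ
  have hφ : ∀ u, φ u = w ⬝ᵥ u := fun u => by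
    rw [← dotProductEquiv_apply_apply, LinearEquiv.apply_symm_apply]
  have hwM : (f ∘ w) ᵥ* M.map f = 0 := funext fun j => by
    rw [← RingHom.map_vecMul, ← dotProduct_single_one (w ᵥ* M), ← dotProduct_mulVec, ← hφ]
    simpa using LinearMap.mem_ker.1 (hφM ⟨Pi.single j 1, rfl⟩)
  apply hφv
  rw [hφ, ← f.injective.eq_iff, map_zero, RingHom.map_dotProduct, ← hx, dotProduct_mulVec, hwM,
    zero_dotProduct]

theorem mem_range_of_mulVec_eq_const_of_vecMul_eq_const [Fintype ι] {K L : Type*} [Field K]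
    [Field L] (f : K →+* L) (A : Matrix ι κ K) {α : L} {β₁ : ι → L} {β₂ : κ → L}
    (hβ₁ : ∑ i, β₁ i = 1) (hβ₂ : ∑ j, β₂ j = 1) (h₁ : A.map f *ᵥ β₂ = fun _ => α)
    (h₂ : β₁ ᵥ* A.map f = fun _ => α) : α ∈ Set.range f := by
  -- the system `A b - a • 1 = 0, ∑ b = 1` in the unknowns `(b, a)`
  let M : Matrix (ι ⊕ Unit) (κ ⊕ Unit) K := fromBlocks A (of fun _ _ => -1) (of fun _ _ => 1) 0
  obtain ⟨y, hy⟩ : ∃ y, M *ᵥ y = Sum.elim (0 : ι → K) 1 := by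
    refine exists_mulVec_eq_of_map_mulVec_eq f M _ (x := Sum.elim β₂ fun _ => α) ?_
    ext (i | _)
    · simpa [M, fromBlocks_map, fromBlocks_mulVec, mulVec, dotProduct, ← sub_eq_add_neg,
        sub_eq_zero] using congrFun h₁ i
    · simpa [M, fromBlocks_map, fromBlocks_mulVec, mulVec, dotProduct] using hβ₂
  have hb : A *ᵥ (y ∘ Sum.inl) = fun _ => y (Sum.inr ()) := funext fun i => by
    simpa [M, fromBlocks_mulVec, mulVec, dotProduct, ← sub_eq_add_neg, sub_eq_zero]
      using congrFun hy (Sum.inl i)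
  have hb_sum : ∑ j, f (y (Sum.inl j)) = 1 := by
    simpa [M, fromBlocks_mulVec, mulVec, dotProduct] using congrArg f (congrFun hy (Sum.inr ()))
  refine ⟨y (Sum.inr ()), ?_⟩
  calc f (y (Sum.inr ())) = β₁ ⬝ᵥ (A.map f *ᵥ (f ∘ y ∘ Sum.inl)) := by
        simp [← RingHom.map_mulVec, hb, dotProduct, ← Finset.sum_mul, hβ₁]
    _ = α := by
        rw [dotProduct_mulVec, h₂]
        simp [dotProduct, ← Finset.mul_sum, hb_sum]

theorem circulant_mulVec_const [NonUnitalNonAssocSemiring R] [AddGroup κ] (v : κ → R) (c : R) :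
    circulant v *ᵥ (fun _ => c) = fun _ => (∑ k, v k) * c := funext fun i => by
  simp only [mulVec, dotProduct, circulant_apply, ← Finset.sum_mul]
  exact congrArg (· * c) ((Equiv.subLeft i).sum_comp v)

theorem const_vecMul_circulant [NonUnitalNonAssocSemiring R] [AddGroup κ] (v : κ → R) (c : R) :
    (fun _ => c) ᵥ* circulant v = fun _ => c * ∑ k, v k := funext fun j => by
  simp only [vecMul, dotProduct, circulant_apply, ← Finset.mul_sum]
  exact congrArg (c * ·) ((Equiv.subRight j).sum_comp v)

end Matrix

theorem exists_zero_one_matrix_of_mem_Icc {a : ℚ} (ha : a ∈ Set.Icc 0 1) :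
    ∃ q : ℕ, 0 < q ∧ ∃ B : Matrix (Fin q) (Fin q) ℝ, (∀ i j, B i j = 0 ∨ B i j = 1) ∧
      B *ᵥ (fun _ => (q : ℝ)⁻¹) = (fun _ => (a : ℝ)) ∧
      (fun _ => (q : ℝ)⁻¹) ᵥ* B = fun _ => (a : ℝ) := by
  have : NeZero a.den := ⟨a.den_nz⟩
  set p := a.num.toNat
  have hp : (p : ℤ) = a.num := Int.toNat_of_nonneg (Rat.num_nonneg.2 ha.1)
  have hpq : p ≤ a.den := Int.toNat_le.2 (Rat.num_le_denom_iff.2 ha.2)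
  let v : Fin a.den → ℝ := fun k => if (k : ℕ) < p then 1 else 0
  have hv : ∑ k, v k = p := by
    simp [v, Finset.sum_boole, Fin.card_filter_val_lt, hpq]
  have ha' : (p : ℝ) * (a.den : ℝ)⁻¹ = a := by
    rw [Rat.cast_def, ← hp, div_eq_mul_inv]; norm_cast
  refine ⟨a.den, a.pos, circulant v, fun i j => ?_, ?_, ?_⟩
  · by_cases h : ((i - j : Fin a.den) : ℕ) < p <;> simp [v, circulant_apply, h]
  · rw [circulant_mulVec_const, hv, ha']
  · rw [const_vecMul_circulant, hv, mul_comm, ha']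

theorem robust_coin_flipping_stmt14_general
    {m n : ℕ} (A : Matrix (Fin m) (Fin n) ℚ)
    (hA01 : ∀ i j, A i j ∈ Set.Icc (0 : ℚ) 1)
    (α : ℝ) (β₁ : Fin m → ℝ) (β₂ : Fin n → ℝ)
    (hβ₁ : ∑ i, β₁ i = 1)
    (hβ₂0 : ∀ j, 0 ≤ β₂ j) (hβ₂ : ∑ j, β₂ j = 1)
    (h1 : ∀ x : Fin m → ℝ,
      x ⬝ᵥ (A.map (Rat.cast : ℚ → ℝ)).mulVec β₂ = α * ∑ i, x i)
    (h2 : ∀ y : Fin n → ℝ,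
      β₁ ⬝ᵥ (A.map (Rat.cast : ℚ → ℝ)).mulVec y = α * ∑ j, y j) :
    ∃ (m' n' : ℕ) (A' : Matrix (Fin m') (Fin n') ℝ)
      (β₁' : Fin m' → ℝ) (β₂' : Fin n' → ℝ),
      (∀ a b, A' a b = 0 ∨ A' a b = 1) ∧
      (∀ a, 0 ≤ β₁' a) ∧ (∑ a, β₁' a = 1) ∧
      (∀ b, 0 ≤ β₂' b) ∧ (∑ b, β₂' b = 1) ∧
      (∀ x : Fin m' → ℝ, x ⬝ᵥ A'.mulVec β₂' = α * ∑ a, x a) ∧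
      (∀ y : Fin n' → ℝ, β₁' ⬝ᵥ A'.mulVec y = α * ∑ b, y b) := by
  have hrow := (forall_dotProduct_eq_mul_sum_iff _ _).1 h1
  have hcol := (forall_dotProduct_mulVec_eq_mul_sum_iff _ _ _).1 h2
  obtain ⟨a, rfl⟩ := mem_range_of_mulVec_eq_const_of_vecMul_eq_const (Rat.castHom ℝ) A hβ₁ hβ₂
    hrow hcol
  obtain ⟨i⟩ : Nonempty (Fin m) :=
    Finset.univ_nonempty_iff.1 (Finset.nonempty_of_sum_ne_zero (hβ₁ ▸ one_ne_zero))
  have ha : a ∈ Set.Icc 0 1 := by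
    have := mulVec_apply_mem_Icc (M := A.map (Rat.cast : ℚ → ℝ))
      (fun i j => by simpa only [map_apply, Set.mem_Icc] using mod_cast hA01 i j) ⟨hβ₂0, hβ₂⟩ i
    simp only [hrow, Rat.coe_castHom, Set.mem_Icc] at this
    exact ⟨mod_cast this.1, mod_cast this.2⟩
  obtain ⟨q, hq, B, hB01, hBrow, hBcol⟩ := exists_zero_one_matrix_of_mem_Icc ha
  refine ⟨q, q, B, _, _, hB01, fun _ => by positivity, by simp [hq.ne'], fun _ => by positivity,
    by simp [hq.ne'], (forall_dotProduct_eq_mul_sum_iff _ _).2 hBrow,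
    (forall_dotProduct_mulVec_eq_mul_sum_iff _ _ _).2 hBcol⟩

/-- p = 2 case of the substitution lemma: if an `m × n` matrix with
rational entries in `[0,1]`, each of which is the mystery-value of some `{0,1}`-matrix
with stochastic mystery-vectors, itself has mystery-value `α` with stochastic
mystery-vectors, then `α` is the mystery-value of a `{0,1}`-matrix with stochastic
mystery-vectors. -/
theorem robust_coin_flipping_stmt14
    {m n : ℕ} (A : Matrix (Fin m) (Fin n) ℚ)
    (hA01 : ∀ i j, A i j ∈ Set.Icc (0 : ℚ) 1)
    (hAcoop : ∀ i j,
      ∃ (m' n' : ℕ) (B : Matrix (Fin m') (Fin n') ℝ)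
        (γ₁ : Fin m' → ℝ) (γ₂ : Fin n' → ℝ),
        (∀ a b, B a b = 0 ∨ B a b = 1) ∧
        (∀ a, 0 ≤ γ₁ a) ∧ (∑ a, γ₁ a = 1) ∧
        (∀ b, 0 ≤ γ₂ b) ∧ (∑ b, γ₂ b = 1) ∧
        (∀ x : Fin m' → ℝ, x ⬝ᵥ B.mulVec γ₂ = (A i j : ℝ) * ∑ a, x a) ∧
        (∀ y : Fin n' → ℝ, γ₁ ⬝ᵥ B.mulVec y = (A i j : ℝ) * ∑ b, y b))
    (α : ℝ) (β₁ : Fin m → ℝ) (β₂ : Fin n → ℝ)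
    (hβ₁0 : ∀ i, 0 ≤ β₁ i) (hβ₁ : ∑ i, β₁ i = 1)
    (hβ₂0 : ∀ j, 0 ≤ β₂ j) (hβ₂ : ∑ j, β₂ j = 1)
    (h1 : ∀ x : Fin m → ℝ,
      x ⬝ᵥ (A.map (Rat.cast : ℚ → ℝ)).mulVec β₂ = α * ∑ i, x i)
    (h2 : ∀ y : Fin n → ℝ,
      β₁ ⬝ᵥ (A.map (Rat.cast : ℚ → ℝ)).mulVec y = α * ∑ j, y j) :
    ∃ (m' n' : ℕ) (A' : Matrix (Fin m') (Fin n') ℝ)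
      (β₁' : Fin m' → ℝ) (β₂' : Fin n' → ℝ),
      (∀ a b, A' a b = 0 ∨ A' a b = 1) ∧
      (∀ a, 0 ≤ β₁' a) ∧ (∑ a, β₁' a = 1) ∧
      (∀ b, 0 ≤ β₂' b) ∧ (∑ b, β₂' b = 1) ∧
      (∀ x : Fin m' → ℝ, x ⬝ᵥ A'.mulVec β₂' = α * ∑ a, x a) ∧
      (∀ y : Fin n' → ℝ, β₁' ⬝ᵥ A'.mulVec y = α * ∑ b, y b) :=
  robust_coin_flipping_stmt14_general A hA01 α β₁ β₂ hβ₁ hβ₂0 hβ₂ h1 h2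
end
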